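/- Let G be a simple planar graph with vertex cover number φ ≥ 2. Then the number of distinct neighborhoods N(v) with |N(v)| ≥ 3 taken over vertices v ∉ C (for a minimum vertex cover C) is at most 2φ − 4; in particular the vertices outside C with degree ≥ 3 realize at most 2φ − 4 distinct neighborhoods. -/

import Mathlib

/-- `H` is a minor of `G`. -/
def SimpleGraph.HasMinor {V : Type*} {W : Type*} (G : SimpleGraph V) (H : SimpleGraph W) : Prop :=
  ∃ f : W → Set V,
    (∀ w, (G.induce (f w)).Connected) ∧
    (∀ w₁ w₂, w₁ ≠ w₂ → Disjoint (f w₁) (f w₂)) ∧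
    (∀ ⦃w₁ w₂⦄, H.Adj w₁ w₂ → ∃ v₁ ∈ f w₁, ∃ v₂ ∈ f w₂, G.Adj v₁ v₂)

/-- A graph is planar iff it has no `K₅` and no `K₃,₃` minor (Wagner/Kuratowski). -/
def SimpleGraph.IsPlanar {V : Type*} (G : SimpleGraph V) : Prop :=
  ¬ G.HasMinor (completeGraph (Fin 5)) ∧
  ¬ G.HasMinor (completeBipartiteGraph (Fin 3) (Fin 3))

/-- `C` is a vertex cover of `G`. -/
def SimpleGraph.IsVertexCoverOld {V : Type*} (G : SimpleGraph V) (C : Set V) : Prop :=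
  ∀ ⦃a b⦄, G.Adj a b → a ∈ C ∨ b ∈ C

namespace PDN
open SimpleGraph Finset

set_option linter.unusedSectionVars false

variable {V : Type*} {G : SimpleGraph V}

lemma induce_singleton_connected (v : V) : (G.induce {v}).Connected := by
  have : Nonempty ({v} : Set V) := ⟨⟨v, rfl⟩⟩
  refine ⟨?_⟩
  rintro ⟨a, ha⟩ ⟨b, hb⟩
  simp only [Set.mem_singleton_iff] at ha hb
  subst ha; subst hb
  exact SimpleGraph.Reachable.refl _

lemma hasMinor_K33 (L R : Fin 3 → Set V)
    (hLc : ∀ i, (G.induce (L i)).Connected) (hRc : ∀ i, (G.induce (R i)).Connected)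
    (hLL : ∀ i j, i ≠ j → Disjoint (L i) (L j))
    (hRR : ∀ i j, i ≠ j → Disjoint (R i) (R j))
    (hLR : ∀ i j, Disjoint (L i) (R j))
    (hadj : ∀ i j, ∃ a ∈ L i, ∃ b ∈ R j, G.Adj a b) :
    G.HasMinor (completeBipartiteGraph (Fin 3) (Fin 3)) := by
  refine ⟨Sum.elim L R, ?_, ?_, ?_⟩
  · rintro (i | i) <;> simp [hLc, hRc]
  · rintro (i | i) (j | j) hne <;> simp only [Sum.elim_inl, Sum.elim_inr]
    · exact hLL i j (by simpa using hne)
    · exact hLR i j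
    · exact (hLR j i).symm
    · exact hRR i j (by simpa using hne)
  · rintro (i | i) (j | j) hadj' <;>
      simp only [completeBipartiteGraph_adj, Sum.isLeft_inl, Sum.isRight_inr, Sum.isLeft_inr,
        Sum.isRight_inl] at hadj' <;> simp only [Sum.elim_inl, Sum.elim_inr]
    · simp at hadj'
    · exact hadj i j
    · obtain ⟨a, ha, b, hb, h⟩ := hadj j i
      exact ⟨b, hb, a, ha, h.symm⟩
    · simp at hadj'

variable {α : Type*} [DecidableEq α] {R : Finset α} {F : Finset (Finset α)}

/-- A representation of a hypergraph `(R, F)` inside the graph `G` by disjoint connected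
branch sets. -/
structure HypRep (G : SimpleGraph V) (R : Finset α) (F : Finset (Finset α)) where
  elt : α → Set V
  tri : Finset α → Set V
  elt_conn : ∀ a ∈ R, (G.induce (elt a)).Connected
  tri_conn : ∀ A ∈ F, (G.induce (tri A)).Connected
  elt_disj : ∀ a ∈ R, ∀ b ∈ R, a ≠ b → Disjoint (elt a) (elt b)
  tri_disj : ∀ A ∈ F, ∀ B ∈ F, A ≠ B → Disjoint (tri A) (tri B)
  elt_tri_disj : ∀ a ∈ R, ∀ A ∈ F, Disjoint (elt a) (tri A)
  adj : ∀ A ∈ F, ∀ a ∈ A, ∃ u ∈ tri A, ∃ v ∈ elt a, G.Adj u v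

def HypRep.restrict (rep : HypRep G R F) {R' : Finset α} {F' : Finset (Finset α)}
    (hR' : R' ⊆ R) (hF' : F' ⊆ F) : HypRep G R' F' where
  elt := rep.elt
  tri := rep.tri
  elt_conn a ha := rep.elt_conn a (hR' ha)
  tri_conn A hA := rep.tri_conn A (hF' hA)
  elt_disj a ha b hb := rep.elt_disj a (hR' ha) b (hR' hb)
  tri_disj A hA B hB := rep.tri_disj A (hF' hA) B (hF' hB)
  elt_tri_disj a ha A hA := rep.elt_tri_disj a (hR' ha) A (hF' hA)
  adj A hA := rep.adj A (hF' hA)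

def HypRep.shrink (rep : HypRep G R F) {A : Finset α} {x : α} (hA : A ∈ F)
    (hnotmem : A.erase x ∉ F) :
    HypRep G R (insert (A.erase x) (F.erase A)) where
  elt := rep.elt
  tri := fun B => if B = A.erase x then rep.tri A else rep.tri B
  elt_conn a ha := rep.elt_conn a ha
  tri_conn B hB := by
    rcases Finset.mem_insert.mp hB with h | h
    · rw [if_pos h]
      exact rep.tri_conn A hA
    · rw [if_neg (by rintro rfl; exact hnotmem (Finset.mem_of_mem_erase h))]
      exact rep.tri_conn B (Finset.mem_of_mem_erase h)
  elt_disj := rep.elt_disj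
  tri_disj B hB C hC hne := by
    rcases Finset.mem_insert.mp hB with h | h <;> rcases Finset.mem_insert.mp hC with h' | h'
    · exact absurd (h.trans h'.symm) hne
    · rw [if_pos h, if_neg (by rintro rfl; exact hnotmem (Finset.mem_of_mem_erase h'))]
      exact rep.tri_disj A hA C (Finset.mem_of_mem_erase h')
        (fun hAC => (Finset.ne_of_mem_erase h') hAC.symm)
    · rw [if_pos h', if_neg (by rintro rfl; exact hnotmem (Finset.mem_of_mem_erase h))]
      exact rep.tri_disj B (Finset.mem_of_mem_erase h) A hA (Finset.ne_of_mem_erase h)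
    · rw [if_neg (by rintro rfl; exact hnotmem (Finset.mem_of_mem_erase h)),
        if_neg (by rintro rfl; exact hnotmem (Finset.mem_of_mem_erase h'))]
      exact rep.tri_disj B (Finset.mem_of_mem_erase h) C (Finset.mem_of_mem_erase h') hne
  elt_tri_disj a ha B hB := by
    rcases Finset.mem_insert.mp hB with h | h
    · rw [if_pos h]; exact rep.elt_tri_disj a ha A hA
    · rw [if_neg (by rintro rfl; exact hnotmem (Finset.mem_of_mem_erase h))]
      exact rep.elt_tri_disj a ha B (Finset.mem_of_mem_erase h)
  adj B hB a haB := by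
    rcases Finset.mem_insert.mp hB with h | h
    · rw [if_pos h]
      exact rep.adj A hA a (Finset.mem_of_mem_erase (h ▸ haB))
    · rw [if_neg (by rintro rfl; exact hnotmem (Finset.mem_of_mem_erase h))]
      exact rep.adj B (Finset.mem_of_mem_erase h) a haB

lemma win_common (rep : HypRep G R F) {A B C : Finset α} (hA : A ∈ F) (hB : B ∈ F) (hC : C ∈ F)
    (hAB : A ≠ B) (hAC : A ≠ C) (hBC : B ≠ C)
    {u v w : α} (hu : u ∈ R) (hv : v ∈ R) (hw : w ∈ R)
    (huv : u ≠ v) (huw : u ≠ w) (hvw : v ≠ w)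
    (huA : u ∈ A) (huB : u ∈ B) (huC : u ∈ C)
    (hvA : v ∈ A) (hvB : v ∈ B) (hvC : v ∈ C)
    (hwA : w ∈ A) (hwB : w ∈ B) (hwC : w ∈ C) :
    G.HasMinor (completeBipartiteGraph (Fin 3) (Fin 3)) := by
  apply hasMinor_K33 ![rep.tri A, rep.tri B, rep.tri C] ![rep.elt u, rep.elt v, rep.elt w]
  · intro i; fin_cases i
    exacts [rep.tri_conn A hA, rep.tri_conn B hB, rep.tri_conn C hC]
  · intro i; fin_cases i
    exacts [rep.elt_conn u hu, rep.elt_conn v hv, rep.elt_conn w hw]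
  · intro i j hne; fin_cases i <;> fin_cases j <;> simp_all <;>
      first
        | exact rep.tri_disj A hA B hB hAB
        | exact rep.tri_disj A hA C hC hAC
        | exact (rep.tri_disj A hA B hB hAB).symm
        | exact rep.tri_disj B hB C hC hBC
        | exact (rep.tri_disj A hA C hC hAC).symm
        | exact (rep.tri_disj B hB C hC hBC).symm
  · intro i j hne; fin_cases i <;> fin_cases j <;> simp_all <;>
      first
        | exact rep.elt_disj u hu v hv huv
        | exact rep.elt_disj u hu w hw huw
        | exact (rep.elt_disj u hu v hv huv).symm
        | exact rep.elt_disj v hv w hw hvw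
        | exact (rep.elt_disj u hu w hw huw).symm
        | exact (rep.elt_disj v hv w hw hvw).symm
  · intro i j; fin_cases i <;> fin_cases j <;>
      first
        | exact (rep.elt_tri_disj u hu A hA).symm
        | exact (rep.elt_tri_disj v hv A hA).symm
        | exact (rep.elt_tri_disj w hw A hA).symm
        | exact (rep.elt_tri_disj u hu B hB).symm
        | exact (rep.elt_tri_disj v hv B hB).symm
        | exact (rep.elt_tri_disj w hw B hB).symm
        | exact (rep.elt_tri_disj u hu C hC).symm
        | exact (rep.elt_tri_disj v hv C hC).symm
        | exact (rep.elt_tri_disj w hw C hC).symm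
  · intro i j; fin_cases i <;> fin_cases j <;>
      first
        | exact rep.adj A hA u huA
        | exact rep.adj A hA v hvA
        | exact rep.adj A hA w hwA
        | exact rep.adj B hB u huB
        | exact rep.adj B hB v hvB
        | exact rep.adj B hB w hwB
        | exact rep.adj C hC u huC
        | exact rep.adj C hC v hvC
        | exact rep.adj C hC w hwC

lemma win_four (rep : HypRep G R F) {P1 P2 P3 P4 : Finset α}
    (h1 : P1 ∈ F) (h2 : P2 ∈ F) (h3 : P3 ∈ F) (h4 : P4 ∈ F)
    (h12 : P1 ≠ P2) (h13 : P1 ≠ P3) (h23 : P2 ≠ P3)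
    (h14 : P4 ≠ P1) (h24 : P4 ≠ P2) (h34 : P4 ≠ P3)
    {a b c d : α} (ha : a ∈ R) (hb : b ∈ R) (hc : c ∈ R) (hd : d ∈ R)
    (hab : a ≠ b) (hac : a ≠ c) (had : a ≠ d) (hbc : b ≠ c) (hbd : b ≠ d) (hcd : c ≠ d)
    (ha1 : a ∈ P1) (hb1 : b ∈ P1) (hc1 : c ∈ P1)
    (ha2 : a ∈ P2) (hb2 : b ∈ P2) (hc2 : c ∈ P2)
    (ha3 : a ∈ P3) (hb3 : b ∈ P3) (hd3 : d ∈ P3)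
    (hc4 : c ∈ P4) (hd4 : d ∈ P4) :
    G.HasMinor (completeBipartiteGraph (Fin 3) (Fin 3)) := by
  set S : Set V := (rep.elt c ∪ rep.tri P4) ∪ rep.elt d with hS
  obtain ⟨u1, hu1, v1, hv1, adj1⟩ := rep.adj P4 h4 c hc4
  obtain ⟨u2, hu2, v2, hv2, adj2⟩ := rep.adj P4 h4 d hd4
  have hSconn : (G.induce S).Connected := by
    apply SimpleGraph.connected_induce_union ?_ (rep.elt_conn d hd).preconnected
      (Or.inr hu2) hv2 adj2
    exact (SimpleGraph.connected_induce_union (rep.elt_conn c hc).preconnected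
      (rep.tri_conn P4 h4).preconnected hv1 hu1 adj1.symm).preconnected
  have hdisjS : ∀ t : Set V, Disjoint t (rep.elt c) → Disjoint t (rep.tri P4) →
      Disjoint t (rep.elt d) → Disjoint t S := by
    intro t htc ht4 htd
    rw [hS, Set.disjoint_union_right, Set.disjoint_union_right]
    exact ⟨⟨htc, ht4⟩, htd⟩
  apply hasMinor_K33 ![rep.tri P1, rep.tri P2, rep.tri P3] ![rep.elt a, rep.elt b, S]
  · intro i; fin_cases i
    exacts [rep.tri_conn P1 h1, rep.tri_conn P2 h2, rep.tri_conn P3 h3]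
  · intro i; fin_cases i
    exacts [rep.elt_conn a ha, rep.elt_conn b hb, hSconn]
  · intro i j hne; fin_cases i <;> fin_cases j <;> simp_all <;>
      first
        | exact rep.tri_disj P1 h1 P2 h2 h12
        | exact rep.tri_disj P1 h1 P3 h3 h13
        | exact (rep.tri_disj P1 h1 P2 h2 h12).symm
        | exact rep.tri_disj P2 h2 P3 h3 h23
        | exact (rep.tri_disj P1 h1 P3 h3 h13).symm
        | exact (rep.tri_disj P2 h2 P3 h3 h23).symm
  · intro i j hne; fin_cases i <;> fin_cases j <;> simp_all <;>
      first
        | exact rep.elt_disj a ha b hb hab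
        | exact (rep.elt_disj a ha b hb hab).symm
        | exact hdisjS _ (rep.elt_disj a ha c hc hac) (rep.elt_tri_disj a ha P4 h4)
            (rep.elt_disj a ha d hd had)
        | exact (hdisjS _ (rep.elt_disj a ha c hc hac) (rep.elt_tri_disj a ha P4 h4)
            (rep.elt_disj a ha d hd had)).symm
        | exact hdisjS _ (rep.elt_disj b hb c hc hbc) (rep.elt_tri_disj b hb P4 h4)
            (rep.elt_disj b hb d hd hbd)
        | exact (hdisjS _ (rep.elt_disj b hb c hc hbc) (rep.elt_tri_disj b hb P4 h4)
            (rep.elt_disj b hb d hd hbd)).symm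
        | exact ⟨⟨rep.elt_disj a ha c hc hac, rep.elt_tri_disj a ha P4 h4⟩,
            rep.elt_disj a ha d hd had⟩
        | exact ⟨⟨rep.elt_disj b hb c hc hbc, rep.elt_tri_disj b hb P4 h4⟩,
            rep.elt_disj b hb d hd hbd⟩
        | exact ⟨⟨(rep.elt_disj a ha c hc hac).symm, (rep.elt_tri_disj a ha P4 h4).symm⟩,
            (rep.elt_disj a ha d hd had).symm⟩
        | exact ⟨⟨(rep.elt_disj b hb c hc hbc).symm, (rep.elt_tri_disj b hb P4 h4).symm⟩,
            (rep.elt_disj b hb d hd hbd).symm⟩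
  · intro i j; fin_cases i <;> fin_cases j <;>
      first
        | exact (rep.elt_tri_disj a ha P1 h1).symm
        | exact (rep.elt_tri_disj b hb P1 h1).symm
        | exact (rep.elt_tri_disj a ha P2 h2).symm
        | exact (rep.elt_tri_disj b hb P2 h2).symm
        | exact (rep.elt_tri_disj a ha P3 h3).symm
        | exact (rep.elt_tri_disj b hb P3 h3).symm
        | exact hdisjS _ ((rep.elt_tri_disj c hc P1 h1).symm)
            (rep.tri_disj P1 h1 P4 h4 (fun h => h14 h.symm))
            ((rep.elt_tri_disj d hd P1 h1).symm)
        | exact hdisjS _ ((rep.elt_tri_disj c hc P2 h2).symm)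
            (rep.tri_disj P2 h2 P4 h4 (fun h => h24 h.symm))
            ((rep.elt_tri_disj d hd P2 h2).symm)
        | exact hdisjS _ ((rep.elt_tri_disj c hc P3 h3).symm)
            (rep.tri_disj P3 h3 P4 h4 (fun h => h34 h.symm))
            ((rep.elt_tri_disj d hd P3 h3).symm)
  · intro i j; fin_cases i <;> fin_cases j <;>
      first
        | exact rep.adj P1 h1 a ha1
        | exact rep.adj P1 h1 b hb1
        | exact rep.adj P2 h2 a ha2
        | exact rep.adj P2 h2 b hb2
        | exact rep.adj P3 h3 a ha3
        | exact rep.adj P3 h3 b hb3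
        | (obtain ⟨u, hu, v, hv, hadj⟩ := rep.adj P1 h1 c hc1
           exact ⟨u, hu, v, Or.inl (Or.inl hv), hadj⟩)
        | (obtain ⟨u, hu, v, hv, hadj⟩ := rep.adj P2 h2 c hc2
           exact ⟨u, hu, v, Or.inl (Or.inl hv), hadj⟩)
        | (obtain ⟨u, hu, v, hv, hadj⟩ := rep.adj P3 h3 d hd3
           exact ⟨u, hu, v, Or.inr hv, hadj⟩)

lemma adj_in_induce {S : Set V} {a b : V} (ha : a ∈ S) (hb : b ∈ S) (h : G.Adj a b) :
    (G.induce S).Adj ⟨a, ha⟩ ⟨b, hb⟩ := h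

lemma reach_in_induce {s S : Set V} (hsS : s ⊆ S) (hconn : (G.induce s).Connected)
    (a b : ↥S) (ha : ↑a ∈ s) (hb : ↑b ∈ s) : (G.induce S).Reachable a b := by
  have h := hconn.preconnected ⟨a.1, ha⟩ ⟨b.1, hb⟩
  have h2 := h.map (G.induceHomOfLE hsS).toHom
  have e1 : ((G.induceHomOfLE hsS).toHom ⟨a.1, ha⟩) = a := Subtype.ext rfl
  have e2 : ((G.induceHomOfLE hsS).toHom ⟨b.1, hb⟩) = b := Subtype.ext rfl
  rwa [e1, e2] at h2

/-- The measure for the induction. -/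
def msr (R : Finset α) (F : Finset (Finset α)) : ℕ :=
  3 * R.card + F.card + F.sum Finset.card

lemma msr_def (R : Finset α) (F : Finset (Finset α)) :
    msr R F = 3 * R.card + F.card + F.sum Finset.card := rfl

section HardSteps

variable (G)

/-- A pair of elements contained in at least three common triples gives a `K₃,₃` minor
or a reduction. -/
lemma step_codeg (R : Finset α) (F : Finset (Finset α))
    (hsub : ∀ A ∈ F, A ⊆ R) (h3 : ∀ A ∈ F, A.card = 3)
    (hF : 2 * R.card - 3 ≤ F.card) (hc5 : 5 ≤ R.card)
    (rep : HypRep G R F)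
    {x p : α} (hx : x ∈ R) (hp : p ∈ R) (hxp : x ≠ p)
    (hcod : 3 ≤ (F.filter (fun T => x ∈ T ∧ p ∈ T)).card)
    (oracle : ∀ (R' : Finset α) (F' : Finset (Finset α)), msr R' F' < msr R F →
      (∀ A ∈ F', A ⊆ R') → (∀ A ∈ F', 3 ≤ A.card) → 2 ≤ R'.card →
      2 * R'.card - 3 ≤ F'.card → HypRep G R' F' →
      G.HasMinor (completeBipartiteGraph (Fin 3) (Fin 3))) :
    G.HasMinor (completeBipartiteGraph (Fin 3) (Fin 3)) := by
  classical
  have hpx : p ≠ x := fun h => hxp h.symm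
  obtain ⟨T1, T2, T3, hT1m, hT2m, hT3m, h12, h13, h23⟩ :=
    Finset.two_lt_card_iff.mp (by omega : 2 < (F.filter (fun T => x ∈ T ∧ p ∈ T)).card)
  have hT1 := Finset.mem_filter.mp hT1m
  have hT2 := Finset.mem_filter.mp hT2m
  have hT3 := Finset.mem_filter.mp hT3m
  -- the third element of a triple through x,p
  have hz : ∀ T ∈ F, x ∈ T → p ∈ T → ∃ z, z ≠ x ∧ z ≠ p ∧ z ∈ T ∧
      (∀ u ∈ T, u ≠ x → u ≠ p → u = z) := by
    intro T hT hxT hpT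
    have h1 : ((T.erase x).erase p).card = 1 := by
      rw [Finset.card_erase_of_mem (Finset.mem_erase.mpr ⟨hpx, hpT⟩),
        Finset.card_erase_of_mem hxT, h3 T hT]
    obtain ⟨z, hzeq⟩ := Finset.card_eq_one.mp h1
    have hzmem : z ∈ (T.erase x).erase p := hzeq ▸ Finset.mem_singleton_self z
    have hz1 := Finset.mem_erase.mp hzmem
    have hz2 := Finset.mem_erase.mp hz1.2
    refine ⟨z, hz2.1, hz1.1, hz2.2, ?_⟩
    intro u hu hux hup
    have : u ∈ (T.erase x).erase p :=
      Finset.mem_erase.mpr ⟨hup, Finset.mem_erase.mpr ⟨hux, hu⟩⟩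
    rw [hzeq] at this
    exact Finset.mem_singleton.mp this
  obtain ⟨z1, hz1x, hz1p, hz1T, hz1u⟩ := hz T1 hT1.1 hT1.2.1 hT1.2.2
  obtain ⟨z2, hz2x, hz2p, hz2T, hz2u⟩ := hz T2 hT2.1 hT2.2.1 hT2.2.2
  obtain ⟨z3, hz3x, hz3p, hz3T, hz3u⟩ := hz T3 hT3.1 hT3.2.1 hT3.2.2
  have hz1R : z1 ∈ R := hsub T1 hT1.1 hz1T
  have hz2R : z2 ∈ R := hsub T2 hT2.1 hz2T
  have hz3R : z3 ∈ R := hsub T3 hT3.1 hz3T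
  -- the reachability relation avoiding x and p
  set Step : α → α → Prop := fun u w => (u ≠ x ∧ u ≠ p ∧ u ∈ R) ∧ (w ≠ x ∧ w ≠ p ∧ w ∈ R) ∧
    ∃ T ∈ F, u ∈ T ∧ w ∈ T with hStepDef
  set Reach : α → Prop := fun u => Relation.ReflTransGen Step z1 u with hReachDef
  set Afin : Finset α := R.filter (fun u => u ≠ x ∧ u ≠ p ∧ Reach u) with hAfin
  have hz1A : z1 ∈ Afin := Finset.mem_filter.mpr ⟨hz1R, hz1x, hz1p, Relation.ReflTransGen.refl⟩
  -- closure of triples under the class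
  have hclos : ∀ T ∈ F, ∀ u ∈ T, u ∈ Afin → ∀ w ∈ T, w ≠ x → w ≠ p → w ∈ Afin := by
    intro T hT u hu huA w hw hwx hwp
    have hu' := Finset.mem_filter.mp huA
    have hwR : w ∈ R := hsub T hT hw
    refine Finset.mem_filter.mpr ⟨hwR, hwx, hwp, ?_⟩
    exact hu'.2.2.2.tail ⟨⟨hu'.2.1, hu'.2.2.1, hu'.1⟩, ⟨hwx, hwp, hwR⟩, T, hT, hu, hw⟩
  by_cases hreach : Reach z2 ∧ Reach z3
  · -- the three z's are in one class : build the K₃,₃ minor directly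
    have hz2A : z2 ∈ Afin := Finset.mem_filter.mpr ⟨hz2R, hz2x, hz2p, hreach.1⟩
    have hz3A : z3 ∈ Afin := Finset.mem_filter.mpr ⟨hz3R, hz3x, hz3p, hreach.2⟩
    set Ffin : Finset (Finset α) :=
      F.filter (fun T => T ≠ T1 ∧ T ≠ T2 ∧ T ≠ T3 ∧ ∃ u ∈ T, u ∈ Afin) with hFfin
    set S : Set V := (⋃ u ∈ Afin, rep.elt u) ∪ (⋃ T ∈ Ffin, rep.tri T) with hSdef
    have hsubS_elt : ∀ u ∈ Afin, rep.elt u ⊆ S := by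
      intro u hu
      refine Set.Subset.trans ?_ Set.subset_union_left
      exact Set.subset_biUnion_of_mem hu
    have hsubS_tri : ∀ T ∈ Ffin, rep.tri T ⊆ S := by
      intro T hT
      refine Set.Subset.trans ?_ Set.subset_union_right
      exact Set.subset_biUnion_of_mem hT
    have hAR : ∀ u ∈ Afin, u ∈ R := fun u hu => (Finset.mem_filter.mp hu).1
    -- main reachability claim inside S
    have hmain : ∀ u, Relation.ReflTransGen Step z1 u → u ≠ x → u ≠ p → u ∈ R →
        ∀ (a b : ↥S), ↑a ∈ rep.elt z1 → ↑b ∈ rep.elt u → (G.induce S).Reachable a b := by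
      intro u hu
      induction hu with
      | refl =>
        intro _ _ _ a b ha hb
        exact reach_in_induce (hsubS_elt z1 hz1A) (rep.elt_conn z1 hz1R) a b ha hb
      | @tail w c hzw hwc ih =>
        intro hcx hcp hcR a b ha hb
        obtain ⟨⟨hwx, hwp, hwR⟩, _, T, hT, hwT, hcT⟩ := hwc
        have hwA : w ∈ Afin := Finset.mem_filter.mpr ⟨hwR, hwx, hwp, hzw⟩
        have hcA : c ∈ Afin := hclos T hT w hwT hwA c hcT hcx hcp
        by_cases hTi : T = T1 ∨ T = T2 ∨ T = T3
        · -- then w = c (both equal the unique third element)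
          have hwc' : w = c := by
            rcases hTi with h | h | h
            · subst h
              rw [hz1u w hwT hwx hwp, hz1u c hcT hcx hcp]
            · subst h
              rw [hz2u w hwT hwx hwp, hz2u c hcT hcx hcp]
            · subst h
              rw [hz3u w hwT hwx hwp, hz3u c hcT hcx hcp]
          exact ih hwx hwp hwR a b ha (hwc' ▸ hb)
        · push_neg at hTi
          have hTF : T ∈ Ffin :=
            Finset.mem_filter.mpr ⟨hT, hTi.1, hTi.2.1, hTi.2.2, w, hwT, hwA⟩
          obtain ⟨u1, hu1, v1, hv1, adj1⟩ := rep.adj T hT w hwT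
          obtain ⟨u2, hu2, v2, hv2, adj2⟩ := rep.adj T hT c hcT
          have hv1S : v1 ∈ S := hsubS_elt w hwA hv1
          have hu1S : u1 ∈ S := hsubS_tri T hTF hu1
          have hu2S : u2 ∈ S := hsubS_tri T hTF hu2
          have hv2S : v2 ∈ S := hsubS_elt c hcA hv2
          have r1 : (G.induce S).Reachable a ⟨v1, hv1S⟩ := ih hwx hwp hwR a ⟨v1, hv1S⟩ ha hv1
          have r2 : (G.induce S).Reachable ⟨v1, hv1S⟩ ⟨u1, hu1S⟩ :=
            (adj_in_induce hv1S hu1S adj1.symm).reachable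
          have r3 : (G.induce S).Reachable ⟨u1, hu1S⟩ ⟨u2, hu2S⟩ :=
            reach_in_induce (hsubS_tri T hTF) (rep.tri_conn T hT) _ _ hu1 hu2
          have r4 : (G.induce S).Reachable ⟨u2, hu2S⟩ ⟨v2, hv2S⟩ :=
            (adj_in_induce hu2S hv2S adj2).reachable
          have r5 : (G.induce S).Reachable ⟨v2, hv2S⟩ b :=
            reach_in_induce (hsubS_elt c hcA) (rep.elt_conn c hcR) _ _ hv2 hb
          exact (((r1.trans r2).trans r3).trans r4).trans r5
    -- S is connected
    obtain ⟨a0v⟩ := (rep.elt_conn z1 hz1R).nonempty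
    have ha0S : (a0v : V) ∈ S := hsubS_elt z1 hz1A a0v.2
    have hreach0 : ∀ v : ↥S, (G.induce S).Reachable ⟨a0v.1, ha0S⟩ v := by
      intro v
      rcases v.2 with hv | hv
      · obtain ⟨u, hu, hvu⟩ := Set.mem_iUnion₂.mp hv
        have hu' := Finset.mem_filter.mp hu
        exact hmain u hu'.2.2.2 hu'.2.1 hu'.2.2.1 hu'.1 ⟨a0v.1, ha0S⟩ v a0v.2 hvu
      · obtain ⟨T, hT, hvT⟩ := Set.mem_iUnion₂.mp hv
        have hT' := Finset.mem_filter.mp hT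
        obtain ⟨u, huT, huA⟩ := hT'.2.2.2.2
        have hu' := Finset.mem_filter.mp huA
        obtain ⟨u1, hu1, v1, hv1, adj1⟩ := rep.adj T hT'.1 u huT
        have hv1S : v1 ∈ S := hsubS_elt u huA hv1
        have hu1S : u1 ∈ S := hsubS_tri T hT hu1
        have r1 : (G.induce S).Reachable ⟨a0v.1, ha0S⟩ ⟨v1, hv1S⟩ :=
          hmain u hu'.2.2.2 hu'.2.1 hu'.2.2.1 hu'.1 _ _ a0v.2 hv1
        have r2 : (G.induce S).Reachable ⟨v1, hv1S⟩ ⟨u1, hu1S⟩ :=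
          (adj_in_induce hv1S hu1S adj1.symm).reachable
        have r3 : (G.induce S).Reachable ⟨u1, hu1S⟩ v :=
          reach_in_induce (hsubS_tri T hT) (rep.tri_conn T hT'.1) _ _ hu1 hvT
        exact (r1.trans r2).trans r3
    have hSconn : (G.induce S).Connected := by
      have : Nonempty ↥S := ⟨⟨a0v.1, ha0S⟩⟩
      refine ⟨fun v w => ?_⟩
      exact (hreach0 v).symm.trans (hreach0 w)
    -- disjointness helper
    have hSdisj : ∀ t : Set V, (∀ u ∈ Afin, Disjoint t (rep.elt u)) →
        (∀ T ∈ Ffin, Disjoint t (rep.tri T)) → Disjoint t S := by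
      intro t h1 h2
      rw [hSdef, Set.disjoint_union_right]
      constructor
      · rw [Set.disjoint_iUnion_right]
        intro u
        rw [Set.disjoint_iUnion_right]
        intro hu
        exact h1 u hu
      · rw [Set.disjoint_iUnion_right]
        intro T
        rw [Set.disjoint_iUnion_right]
        intro hT
        exact h2 T hT
    -- now assemble the K₃,₃
    have hTne : ∀ T ∈ Ffin, T ≠ T1 ∧ T ≠ T2 ∧ T ≠ T3 := fun T hT =>
      ⟨(Finset.mem_filter.mp hT).2.1, (Finset.mem_filter.mp hT).2.2.1,
        (Finset.mem_filter.mp hT).2.2.2.1⟩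
    apply hasMinor_K33 ![rep.tri T1, rep.tri T2, rep.tri T3] ![rep.elt x, rep.elt p, S]
    · intro i; fin_cases i
      exacts [rep.tri_conn T1 hT1.1, rep.tri_conn T2 hT2.1, rep.tri_conn T3 hT3.1]
    · intro i; fin_cases i
      exacts [rep.elt_conn x hx, rep.elt_conn p hp, hSconn]
    · intro i j hne; fin_cases i <;> fin_cases j <;>
        first
          | exact absurd rfl hne
          | exact rep.tri_disj T1 hT1.1 T2 hT2.1 h12
          | exact rep.tri_disj T1 hT1.1 T3 hT3.1 h13
          | exact (rep.tri_disj T1 hT1.1 T2 hT2.1 h12).symm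
          | exact rep.tri_disj T2 hT2.1 T3 hT3.1 h23
          | exact (rep.tri_disj T1 hT1.1 T3 hT3.1 h13).symm
          | exact (rep.tri_disj T2 hT2.1 T3 hT3.1 h23).symm
    · intro i j hne
      have hdx : Disjoint (rep.elt x) S := hSdisj _
        (fun u hu => rep.elt_disj x hx u (hAR u hu) (fun h => (Finset.mem_filter.mp hu).2.1 h.symm))
        (fun T hT => rep.elt_tri_disj x hx T (Finset.mem_of_mem_filter T hT))
      have hdp : Disjoint (rep.elt p) S := hSdisj _
        (fun u hu => rep.elt_disj p hp u (hAR u hu) (fun h => (Finset.mem_filter.mp hu).2.2.1 h.symm))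
        (fun T hT => rep.elt_tri_disj p hp T (Finset.mem_of_mem_filter T hT))
      fin_cases i <;> fin_cases j <;>
        first
          | exact absurd rfl hne
          | exact rep.elt_disj x hx p hp hxp
          | exact (rep.elt_disj x hx p hp hxp).symm
          | exact hdx
          | exact hdx.symm
          | exact hdp
          | exact hdp.symm
    · intro i j
      have hd1 : Disjoint (rep.tri T1) S := hSdisj _
        (fun u hu => (rep.elt_tri_disj u (hAR u hu) T1 hT1.1).symm)
        (fun T hT => (rep.tri_disj T (Finset.mem_of_mem_filter T hT) T1 hT1.1 (hTne T hT).1).symm)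
      have hd2 : Disjoint (rep.tri T2) S := hSdisj _
        (fun u hu => (rep.elt_tri_disj u (hAR u hu) T2 hT2.1).symm)
        (fun T hT => (rep.tri_disj T (Finset.mem_of_mem_filter T hT) T2 hT2.1 (hTne T hT).2.1).symm)
      have hd3 : Disjoint (rep.tri T3) S := hSdisj _
        (fun u hu => (rep.elt_tri_disj u (hAR u hu) T3 hT3.1).symm)
        (fun T hT => (rep.tri_disj T (Finset.mem_of_mem_filter T hT) T3 hT3.1 (hTne T hT).2.2).symm)
      fin_cases i <;> fin_cases j <;>
        first
          | exact (rep.elt_tri_disj x hx T1 hT1.1).symm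
          | exact (rep.elt_tri_disj p hp T1 hT1.1).symm
          | exact (rep.elt_tri_disj x hx T2 hT2.1).symm
          | exact (rep.elt_tri_disj p hp T2 hT2.1).symm
          | exact (rep.elt_tri_disj x hx T3 hT3.1).symm
          | exact (rep.elt_tri_disj p hp T3 hT3.1).symm
          | exact hd1
          | exact hd2
          | exact hd3
    · intro i j
      fin_cases i <;> fin_cases j <;>
        first
          | exact rep.adj T1 hT1.1 x hT1.2.1
          | exact rep.adj T1 hT1.1 p hT1.2.2
          | exact rep.adj T2 hT2.1 x hT2.2.1
          | exact rep.adj T2 hT2.1 p hT2.2.2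
          | exact rep.adj T3 hT3.1 x hT3.2.1
          | exact rep.adj T3 hT3.1 p hT3.2.2
          | (obtain ⟨u, hu, v, hv, hadj⟩ := rep.adj T1 hT1.1 z1 hz1T
             exact ⟨u, hu, v, hsubS_elt z1 hz1A hv, hadj⟩)
          | (obtain ⟨u, hu, v, hv, hadj⟩ := rep.adj T2 hT2.1 z2 hz2T
             exact ⟨u, hu, v, hsubS_elt z2 hz2A hv, hadj⟩)
          | (obtain ⟨u, hu, v, hv, hadj⟩ := rep.adj T3 hT3.1 z3 hz3T
             exact ⟨u, hu, v, hsubS_elt z3 hz3A hv, hadj⟩)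
  · -- some z is not reachable : split the hypergraph
    have hqex : ∃ q, q ≠ x ∧ q ≠ p ∧ q ∈ R ∧ ¬ Reach q := by
      by_cases h2 : Reach z2
      · refine ⟨z3, hz3x, hz3p, hz3R, fun h => hreach ⟨h2, h⟩⟩
      · exact ⟨z2, hz2x, hz2p, hz2R, h2⟩
    obtain ⟨q, hqx, hqp, hqR, hqnr⟩ := hqex
    set Bfil : Finset α := R.filter (fun u => u ≠ x ∧ u ≠ p ∧ ¬ Reach u) with hBfil
    set RA : Finset α := insert x (insert p Afin) with hRA
    set RB : Finset α := insert x (insert p Bfil) with hRB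
    set FA : Finset (Finset α) := F.filter (fun T => ∃ u ∈ T, u ∈ Afin) with hFA
    set FB : Finset (Finset α) := F.filter (fun T => ¬ ∃ u ∈ T, u ∈ Afin) with hFB
    have hqB : q ∈ Bfil := Finset.mem_filter.mpr ⟨hqR, hqx, hqp, hqnr⟩
    have hxA : x ∉ Afin := fun h => (Finset.mem_filter.mp h).2.1 rfl
    have hpA : p ∉ Afin := fun h => (Finset.mem_filter.mp h).2.2.1 rfl
    have hxB : x ∉ Bfil := fun h => (Finset.mem_filter.mp h).2.1 rfl
    have hpB : p ∉ Bfil := fun h => (Finset.mem_filter.mp h).2.2.1 rfl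
    have hRAcard : RA.card = Afin.card + 2 := by
      rw [hRA, Finset.card_insert_of_notMem (by
        intro h
        rcases Finset.mem_insert.mp h with h | h
        · exact hxp h
        · exact hxA h), Finset.card_insert_of_notMem hpA]
    have hRBcard : RB.card = Bfil.card + 2 := by
      rw [hRB, Finset.card_insert_of_notMem (by
        intro h
        rcases Finset.mem_insert.mp h with h | h
        · exact hxp h
        · exact hxB h), Finset.card_insert_of_notMem hpB]
    have hR2card : (R.filter (fun u => u ≠ x ∧ u ≠ p)).card = R.card - 2 := by
      have hR2 : R.filter (fun u => u ≠ x ∧ u ≠ p) = (R.erase x).erase p := by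
        ext u
        simp only [Finset.mem_filter, Finset.mem_erase]
        tauto
      rw [hR2, Finset.card_erase_of_mem (Finset.mem_erase.mpr ⟨hpx, hp⟩),
        Finset.card_erase_of_mem hx]
      omega
    have hABpart : Afin.card + Bfil.card = R.card - 2 := by
      have h1 : Afin = (R.filter (fun u => u ≠ x ∧ u ≠ p)).filter (fun u => Reach u) := by
        rw [hAfin, Finset.filter_filter]
        apply Finset.filter_congr
        intro u _
        constructor
        · rintro ⟨h1, h2, h3⟩; exact ⟨⟨h1, h2⟩, h3⟩
        · rintro ⟨⟨h1, h2⟩, h3⟩; exact ⟨h1, h2, h3⟩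
      have h2 : Bfil = (R.filter (fun u => u ≠ x ∧ u ≠ p)).filter (fun u => ¬ Reach u) := by
        rw [hBfil, Finset.filter_filter]
        apply Finset.filter_congr
        intro u _
        constructor
        · rintro ⟨h1, h2, h3⟩; exact ⟨⟨h1, h2⟩, h3⟩
        · rintro ⟨⟨h1, h2⟩, h3⟩; exact ⟨h1, h2, h3⟩
      have h3' := Finset.card_filter_add_card_filter_not
        (s := R.filter (fun u => u ≠ x ∧ u ≠ p)) (p := fun u => Reach u)
      rw [← h1, ← h2] at h3'
      omega
    have hFpart : FA.card + FB.card = F.card := by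
      rw [hFA, hFB]
      exact Finset.card_filter_add_card_filter_not _
    have hsubFA : ∀ T ∈ FA, T ⊆ RA := by
      intro T hT a ha
      have hT' := Finset.mem_filter.mp hT
      obtain ⟨u, huT, huA⟩ := hT'.2
      by_cases hax : a = x
      · subst hax; rw [hRA]; exact Finset.mem_insert_self _ _
      · by_cases hap : a = p
        · subst hap; rw [hRA]
          exact Finset.mem_insert_of_mem (Finset.mem_insert_self _ _)
        · have : a ∈ Afin := hclos T hT'.1 u huT huA a ha hax hap
          rw [hRA]
          exact Finset.mem_insert_of_mem (Finset.mem_insert_of_mem this)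
    have hsubFB : ∀ T ∈ FB, T ⊆ RB := by
      intro T hT a ha
      have hT' := Finset.mem_filter.mp hT
      by_cases hax : a = x
      · subst hax; rw [hRB]; exact Finset.mem_insert_self _ _
      · by_cases hap : a = p
        · subst hap; rw [hRB]
          exact Finset.mem_insert_of_mem (Finset.mem_insert_self _ _)
        · have haR : a ∈ R := hsub T hT'.1 ha
          have hanr : ¬ Reach a := by
            intro hr
            exact hT'.2 ⟨a, ha, Finset.mem_filter.mpr ⟨haR, hax, hap, hr⟩⟩
          rw [hRB]
          exact Finset.mem_insert_of_mem (Finset.mem_insert_of_mem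
            (Finset.mem_filter.mpr ⟨haR, hax, hap, hanr⟩))
    have hApos : 1 ≤ Afin.card := Finset.card_pos.mpr ⟨z1, hz1A⟩
    have hBpos : 1 ≤ Bfil.card := Finset.card_pos.mpr ⟨q, hqB⟩
    have hsumA : FA.sum Finset.card ≤ F.sum Finset.card :=
      Finset.sum_le_sum_of_subset (Finset.filter_subset _ _)
    have hsumB : FB.sum Finset.card ≤ F.sum Finset.card :=
      Finset.sum_le_sum_of_subset (Finset.filter_subset _ _)
    have hFAle : FA.card ≤ F.card := Finset.card_filter_le _ _
    have hFBle : FB.card ≤ F.card := Finset.card_filter_le _ _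
    by_cases hchoice : 2 * RA.card - 3 ≤ FA.card
    · apply oracle RA FA ?_ hsubFA
        (fun T hT => (h3 T (Finset.mem_of_mem_filter T hT)).symm ▸ le_refl 3)
        (by omega) hchoice
        (rep.restrict (by
          rw [hRA]
          apply Finset.insert_subset hx
          apply Finset.insert_subset hp
          exact Finset.filter_subset _ _) (Finset.filter_subset _ _))
      simp only [msr_def]
      omega
    · have hchoiceB : 2 * RB.card - 3 ≤ FB.card := by omega
      apply oracle RB FB ?_ hsubFB
        (fun T hT => (h3 T (Finset.mem_of_mem_filter T hT)).symm ▸ le_refl 3)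
        (by omega) hchoiceB
        (rep.restrict (by
          rw [hRB]
          apply Finset.insert_subset hx
          apply Finset.insert_subset hp
          exact Finset.filter_subset _ _) (Finset.filter_subset _ _))
      simp only [msr_def]
      omega

/-- Contracting a suitable pair of elements. -/
lemma step_contract (R : Finset α) (F : Finset (Finset α))
    (hsub : ∀ A ∈ F, A ⊆ R) (h3 : ∀ A ∈ F, A.card = 3)
    (hF : F.card = 2 * R.card - 3) (hc5 : 5 ≤ R.card)
    (rep : HypRep G R F)
    {x p : α} {T₀ : Finset α} (hx : x ∈ R) (hp : p ∈ R) (hxp : x ≠ p)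
    (hT₀ : T₀ ∈ F) (hxT₀ : x ∈ T₀) (hpT₀ : p ∈ T₀)
    (hL : (F.filter (fun T => x ∈ T ∧ p ∈ T)).card - 1
        + (F.filter (fun T => x ∈ T ∧ p ∉ T ∧ insert p (T.erase x) ∈ F)).card ≤ 1)
    (oracle : ∀ (R' : Finset α) (F' : Finset (Finset α)), msr R' F' < msr R F →
      (∀ A ∈ F', A ⊆ R') → (∀ A ∈ F', 3 ≤ A.card) → 2 ≤ R'.card →
      2 * R'.card - 3 ≤ F'.card → HypRep G R' F' →
      G.HasMinor (completeBipartiteGraph (Fin 3) (Fin 3))) :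
    G.HasMinor (completeBipartiteGraph (Fin 3) (Fin 3)) := by
  classical
  have hpx : p ≠ x := fun h => hxp h.symm
  set σ : Finset α → Finset α := fun T => if x ∈ T then insert p (T.erase x) else T with hσ
  set D : Finset (Finset α) := (F.erase T₀).filter (fun T => ¬(x ∈ T ∧ p ∈ T)) with hDdef
  set F' : Finset (Finset α) := D.image σ with hF'def
  have hDF : D ⊆ F := (Finset.filter_subset _ _).trans (Finset.erase_subset _ _)
  have hDnx : ∀ T ∈ D, x ∈ T → p ∉ T := by
    intro T hT hxT hpT
    exact (Finset.mem_filter.mp hT).2 ⟨hxT, hpT⟩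
  have hDnT₀ : ∀ T ∈ D, T ≠ T₀ := fun T hT =>
    Finset.ne_of_mem_erase (Finset.mem_of_mem_filter T hT)
  have hmemF' : ∀ B ∈ F', ∃ T, T ∈ D ∧ σ T = B := by
    intro B hB
    obtain ⟨T, hT, hTB⟩ := Finset.mem_image.mp hB
    exact ⟨T, hT, hTB⟩
  -- the preimage function
  have hpre : ∃ pre : Finset α → Finset α, ∀ B ∈ F', pre B ∈ D ∧ σ (pre B) = B := by
    choose f hf1 hf2 using fun (B : F') => hmemF' B.1 B.2
    refine ⟨fun B => if h : B ∈ F' then f ⟨B, h⟩ else ∅, ?_⟩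
    intro B hB
    dsimp only
    rw [dif_pos hB]
    exact ⟨hf1 ⟨B, hB⟩, hf2 ⟨B, hB⟩⟩
  obtain ⟨pre, hpre⟩ := hpre
  -- basic facts about σ-images
  have hσcard : ∀ T ∈ D, (σ T).card = 3 := by
    intro T hT
    by_cases hxT : x ∈ T
    · have hpT : p ∉ T := hDnx T hT hxT
      simp only [hσ, if_pos hxT]
      rw [Finset.card_insert_of_notMem (fun h => hpT (Finset.mem_of_mem_erase h)),
        Finset.card_erase_of_mem hxT, h3 T (hDF hT)]
    · simp only [hσ, if_neg hxT]
      exact h3 T (hDF hT)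
  have hσsub : ∀ T ∈ D, σ T ⊆ R.erase x := by
    intro T hT a ha
    by_cases hxT : x ∈ T
    · simp only [hσ, if_pos hxT] at ha
      rcases Finset.mem_insert.mp ha with h | h
      · subst h
        exact Finset.mem_erase.mpr ⟨hpx, hp⟩
      · have := Finset.mem_erase.mp h
        exact Finset.mem_erase.mpr ⟨this.1, hsub T (hDF hT) this.2⟩
    · simp only [hσ, if_neg hxT] at ha
      exact Finset.mem_erase.mpr ⟨fun h => hxT (h ▸ ha), hsub T (hDF hT) ha⟩
  -- cardinality bookkeeping
  have hcodpos : T₀ ∈ F.filter (fun T => x ∈ T ∧ p ∈ T) := Finset.mem_filter.mpr ⟨hT₀, hxT₀, hpT₀⟩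
  have hDcard : D.card + (F.filter (fun T => x ∈ T ∧ p ∈ T)).card = F.card := by
    have hsplit : ((F.erase T₀).filter (fun T => x ∈ T ∧ p ∈ T)).card + D.card
        = (F.erase T₀).card := by
      rw [hDdef]
      exact Finset.card_filter_add_card_filter_not _
    have he1 : (F.erase T₀).filter (fun T => x ∈ T ∧ p ∈ T)
        = (F.filter (fun T => x ∈ T ∧ p ∈ T)).erase T₀ := Finset.filter_erase _ _ _
    have he1' := congrArg Finset.card he1
    have he2 : ((F.filter (fun T => x ∈ T ∧ p ∈ T)).erase T₀).card
        = (F.filter (fun T => x ∈ T ∧ p ∈ T)).card - 1 := Finset.card_erase_of_mem hcodpos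
    have he3 : 1 ≤ (F.filter (fun T => x ∈ T ∧ p ∈ T)).card := Finset.card_pos.mpr ⟨T₀, hcodpos⟩
    have he4 : (F.erase T₀).card = F.card - 1 := Finset.card_erase_of_mem hT₀
    have he5 : 1 ≤ F.card := Finset.card_pos.mpr ⟨T₀, hT₀⟩
    omega
  have hD0 : (D.filter (fun T => x ∉ T)).card + (D.filter (fun T => ¬ x ∉ T)).card = D.card :=
    Finset.card_filter_add_card_filter_not _
  have himg0 : (D.filter (fun T => x ∉ T)).image σ = D.filter (fun T => x ∉ T) := by
    have : ∀ T ∈ D.filter (fun T => x ∉ T), σ T = id T := by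
      intro T hT
      simp only [hσ, if_neg (Finset.mem_filter.mp hT).2, id]
    rw [Finset.image_congr this, Finset.image_id]
  have himg1card : ((D.filter (fun T => ¬ x ∉ T)).image σ).card
      = (D.filter (fun T => ¬ x ∉ T)).card := by
    apply Finset.card_image_of_injOn
    intro T hT T' hT' heq
    have hxT : x ∈ T := not_not.mp (Finset.mem_filter.mp hT).2
    have hxT' : x ∈ T' := not_not.mp (Finset.mem_filter.mp hT').2
    have hDT : T ∈ D := Finset.mem_of_mem_filter T hT
    have hDT' : T' ∈ D := Finset.mem_of_mem_filter T' hT'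
    have hpT : p ∉ T := hDnx T hDT hxT
    have hpT' : p ∉ T' := hDnx T' hDT' hxT'
    simp only [hσ, if_pos hxT, if_pos hxT'] at heq
    have h1 : T.erase x = T'.erase x := by
      have e1 : (insert p (T.erase x)).erase p = T.erase x :=
        Finset.erase_insert (fun h => hpT (Finset.mem_of_mem_erase h))
      have e2 : (insert p (T'.erase x)).erase p = T'.erase x :=
        Finset.erase_insert (fun h => hpT' (Finset.mem_of_mem_erase h))
      rw [← e1, ← e2, heq]
    rw [← Finset.insert_erase hxT, ← Finset.insert_erase hxT', h1]
  have hFsplit : F' = (D.filter (fun T => x ∉ T)) ∪ (D.filter (fun T => ¬ x ∉ T)).image σ := by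
    rw [hF'def, ← himg0, ← Finset.image_union,
      Finset.filter_union_filter_not_eq (fun T => x ∉ T) D]
  have hinter : ((D.filter (fun T => x ∉ T)) ∩ ((D.filter (fun T => ¬ x ∉ T)).image σ)).card
      ≤ (F.filter (fun T => x ∈ T ∧ p ∉ T ∧ insert p (T.erase x) ∈ F)).card := by
    have hss : (D.filter (fun T => x ∉ T)) ∩ ((D.filter (fun T => ¬ x ∉ T)).image σ)
        ⊆ (F.filter (fun T => x ∈ T ∧ p ∉ T ∧ insert p (T.erase x) ∈ F)).image σ := by
      intro B hB
      have hB0 := Finset.mem_inter.mp hB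
      obtain ⟨T, hT, hTB⟩ := Finset.mem_image.mp hB0.2
      have hxT : x ∈ T := not_not.mp (Finset.mem_filter.mp hT).2
      have hDT : T ∈ D := Finset.mem_of_mem_filter T hT
      have hpT : p ∉ T := hDnx T hDT hxT
      apply Finset.mem_image.mpr
      refine ⟨T, ?_, hTB⟩
      apply Finset.mem_filter.mpr
      refine ⟨hDF hDT, hxT, hpT, ?_⟩
      have hBF : B ∈ F := hDF (Finset.mem_of_mem_filter B hB0.1)
      have : σ T = insert p (T.erase x) := by simp only [hσ, if_pos hxT]
      rw [← this, hTB]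
      exact hBF
    exact (Finset.card_le_card hss).trans (Finset.card_image_le)
  have hcardF' : 2 * (R.erase x).card - 3 ≤ F'.card := by
    have hcu := Finset.card_union_add_card_inter (D.filter (fun T => x ∉ T))
      ((D.filter (fun T => ¬ x ∉ T)).image σ)
    rw [← hFsplit] at hcu
    have hRe : (R.erase x).card = R.card - 1 := Finset.card_erase_of_mem hx
    omega
  -- the new representation
  obtain ⟨ux, hux, vx, hvx, adjx⟩ := rep.adj T₀ hT₀ x hxT₀
  obtain ⟨up, hup, vp, hvp, adjp⟩ := rep.adj T₀ hT₀ p hpT₀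
  set blob : Set V := (rep.elt x ∪ rep.tri T₀) ∪ rep.elt p with hblob
  have hblobconn : (G.induce blob).Connected := by
    apply SimpleGraph.connected_induce_union ?_ (rep.elt_conn p hp).preconnected (Or.inr hup) hvp adjp
    exact (SimpleGraph.connected_induce_union (rep.elt_conn x hx).preconnected
      (rep.tri_conn T₀ hT₀).preconnected hvx hux adjx.symm).preconnected
  have hblobdisj : ∀ t : Set V, Disjoint t (rep.elt x) → Disjoint t (rep.tri T₀) →
      Disjoint t (rep.elt p) → Disjoint t blob := by
    intro t h1 h2 h3
    rw [hblob, Set.disjoint_union_right, Set.disjoint_union_right]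
    exact ⟨⟨h1, h2⟩, h3⟩
  set rep' : HypRep G (R.erase x) F' :=
    { elt := fun a => if a = p then blob else rep.elt a
      tri := fun B => rep.tri (pre B)
      elt_conn := by
        intro a ha
        by_cases hap : a = p
        · rw [if_pos hap]; exact hblobconn
        · rw [if_neg hap]; exact rep.elt_conn a (Finset.mem_of_mem_erase ha)
      tri_conn := by
        intro B hB
        exact rep.tri_conn (pre B) (hDF (hpre B hB).1)
      elt_disj := by
        intro a ha b hb hab
        have haR : a ∈ R := Finset.mem_of_mem_erase ha
        have hbR : b ∈ R := Finset.mem_of_mem_erase hb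
        have hax : a ≠ x := (Finset.mem_erase.mp ha).1
        have hbx : b ≠ x := (Finset.mem_erase.mp hb).1
        by_cases hap : a = p <;> by_cases hbp : b = p
        · exact absurd (hap.trans hbp.symm) hab
        · rw [if_pos hap, if_neg hbp]
          refine (hblobdisj _ ?_ ?_ ?_).symm
          · exact rep.elt_disj b hbR x hx hbx
          · exact rep.elt_tri_disj b hbR T₀ hT₀
          · exact rep.elt_disj b hbR p hp hbp
        · rw [if_neg hap, if_pos hbp]
          refine hblobdisj _ ?_ ?_ ?_
          · exact rep.elt_disj a haR x hx hax
          · exact rep.elt_tri_disj a haR T₀ hT₀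
          · exact rep.elt_disj a haR p hp hap
        · rw [if_neg hap, if_neg hbp]
          exact rep.elt_disj a haR b hbR hab
      tri_disj := by
        intro B hB B' hB' hne
        have h1 := hpre B hB
        have h2 := hpre B' hB'
        apply rep.tri_disj _ (hDF h1.1) _ (hDF h2.1)
        intro he
        exact hne (h1.2 ▸ h2.2 ▸ he ▸ rfl)
      elt_tri_disj := by
        intro a ha B hB
        have hT := hpre B hB
        by_cases hap : a = p
        · rw [if_pos hap]
          refine (hblobdisj (rep.tri (pre B)) ?_ ?_ ?_).symm
          · exact (rep.elt_tri_disj x hx (pre B) (hDF hT.1)).symm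
          · exact rep.tri_disj (pre B) (hDF hT.1) T₀ hT₀ (hDnT₀ _ hT.1)
          · exact (rep.elt_tri_disj p hp (pre B) (hDF hT.1)).symm
        · rw [if_neg hap]
          exact rep.elt_tri_disj a (Finset.mem_of_mem_erase ha) (pre B) (hDF hT.1)
      adj := by
        intro B hB a haB
        have hT := hpre B hB
        set T := pre B with hTdef
        by_cases hxT : x ∈ T
        · have hpT : p ∉ T := hDnx T hT.1 hxT
          have hBeq : B = insert p (T.erase x) := by
            rw [← hT.2]; simp only [hσ, if_pos hxT]
          by_cases hap : a = p
          · rw [if_pos hap]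
            obtain ⟨u, hu, v, hv, hadj⟩ := rep.adj T (hDF hT.1) x hxT
            exact ⟨u, hu, v, Or.inl (Or.inl hv), hadj⟩
          · rw [if_neg hap]
            have haT : a ∈ T := by
              rw [hBeq] at haB
              rcases Finset.mem_insert.mp haB with h | h
              · exact absurd h hap
              · exact Finset.mem_of_mem_erase h
            exact rep.adj T (hDF hT.1) a haT
        · have hBeq : B = T := by rw [← hT.2]; simp only [hσ, if_neg hxT]
          by_cases hap : a = p
          · rw [if_pos hap]
            obtain ⟨u, hu, v, hv, hadj⟩ := rep.adj T (hDF hT.1) a (hBeq ▸ haB)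
            rw [hap] at hv
            exact ⟨u, hu, v, Or.inr hv, hadj⟩
          · rw [if_neg hap]
            exact rep.adj T (hDF hT.1) a (hBeq ▸ haB) } with hrep'
  -- apply the oracle
  apply oracle (R.erase x) F' ?_ ?_ ?_ ?_ hcardF' rep'
  · -- measure decreases
    have hF'le : F'.card ≤ F.card := (Finset.card_image_le).trans
      (Finset.card_le_card hDF)
    have hF'pos : 1 ≤ F.card := Finset.card_pos.mpr ⟨T₀, hT₀⟩
    have hsum1 : F'.sum Finset.card = F'.card * 3 := by
      apply Finset.sum_const_nat
      intro B hB
      have hT := hpre B hB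
      rw [← hT.2]
      exact hσcard _ hT.1
    have hsum2 : F.sum Finset.card = F.card * 3 := by
      apply Finset.sum_const_nat
      intro B hB
      exact h3 B hB
    have hRe : (R.erase x).card = R.card - 1 := Finset.card_erase_of_mem hx
    have hRpos : 1 ≤ R.card := by omega
    simp only [msr_def]
    omega
  · -- subsets
    intro B hB
    have hT := hpre B hB
    rw [← hT.2]
    exact hσsub _ hT.1
  · -- cards
    intro B hB
    have hT := hpre B hB
    rw [← hT.2, hσcard _ hT.1]
  · -- 2 ≤ card
    have hRe : (R.erase x).card = R.card - 1 := Finset.card_erase_of_mem hx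
    omega

end HardSteps

/-- Final counting contradiction. -/
lemma parity_contra {R : Finset α} {F : Finset (Finset α)}
    (hsub : ∀ A ∈ F, A ⊆ R) (h3 : ∀ A ∈ F, A.card = 3)
    (hFeq : F.card = 2 * R.card - 3) (hc5 : 5 ≤ R.card)
    (hcod2 : ∀ x ∈ R, ∀ p ∈ R, x ≠ p → (F.filter (fun T => x ∈ T ∧ p ∈ T)).card ≤ 2)
    (hnocon : ∀ x ∈ R, ∀ p ∈ R, x ≠ p → 1 ≤ (F.filter (fun T => x ∈ T ∧ p ∈ T)).card →
      2 ≤ (F.filter (fun T => x ∈ T ∧ p ∈ T)).card - 1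
        + (F.filter (fun T => x ∈ T ∧ p ∉ T ∧ insert p (T.erase x) ∈ F)).card) :
    False := by
  classical
  set κ : Finset α → ℕ := fun e => (F.filter (fun T => e ⊆ T)).card with hκdef
  set P2 : Finset (Finset α) := R.powersetCard 2 with hP2
  set collU : Finset α → ℕ := fun e =>
    (P2.filter (fun e' => Disjoint e e' ∧ ∀ y ∈ e, insert y e' ∈ F)).card with hcollUdef
  have hpair : ∀ e ∈ P2, ∃ x p, x ≠ p ∧ x ∈ R ∧ p ∈ R ∧ e = {x, p} := by
    intro e he
    rw [hP2, Finset.mem_powersetCard] at he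
    obtain ⟨x, p, hxp, hexp⟩ := Finset.card_eq_two.mp he.2
    refine ⟨x, p, hxp, ?_, ?_, hexp⟩
    · exact he.1 (hexp ▸ Finset.mem_insert_self x {p})
    · exact he.1 (hexp ▸ Finset.mem_insert_of_mem (Finset.mem_singleton_self p))
  have hfilter_eq : ∀ x p : α,
      F.filter (fun T => ({x, p} : Finset α) ⊆ T) = F.filter (fun T => x ∈ T ∧ p ∈ T) := by
    intro x p
    apply Finset.filter_congr
    intro T _
    simp [Finset.insert_subset_iff]
  have hκ2 : ∀ e ∈ P2, κ e ≤ 2 := by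
    intro e he
    obtain ⟨x, p, hxp, hx, hp, hexp⟩ := hpair e he
    rw [hκdef]
    dsimp only
    rw [hexp, hfilter_eq]
    exact hcod2 x hx p hp hxp
  -- ordered collision count equals unordered one
  have hcoll_eq : ∀ x p : α, x ≠ p → x ∈ R → p ∈ R →
      (F.filter (fun T => x ∈ T ∧ p ∉ T ∧ insert p (T.erase x) ∈ F)).card
        = collU {x, p} := by
    intro x p hxp hx hp
    rw [hcollUdef]
    dsimp only
    apply Finset.card_bij (fun T _ => T.erase x)
    · intro T hT
      obtain ⟨hTF, hxT, hpT, hins⟩ := Finset.mem_filter.mp hT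
      apply Finset.mem_filter.mpr
      refine ⟨?_, ?_, ?_⟩
      · rw [hP2, Finset.mem_powersetCard]
        constructor
        · exact (Finset.erase_subset _ _).trans (hsub T hTF)
        · rw [Finset.card_erase_of_mem hxT, h3 T hTF]
      · rw [Finset.disjoint_left]
        intro y hy hy'
        rcases Finset.mem_insert.mp hy with h | h
        · subst h; exact Finset.notMem_erase y T hy'
        · rw [Finset.mem_singleton] at h
          subst h
          exact hpT (Finset.mem_of_mem_erase hy')
      · intro y hy
        rcases Finset.mem_insert.mp hy with h | h
        · subst h; rw [Finset.insert_erase hxT]; exact hTF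
        · rw [Finset.mem_singleton] at h
          subst h; exact hins
    · intro T hT T' hT' heq
      have hxT : x ∈ T := (Finset.mem_filter.mp hT).2.1
      have hxT' : x ∈ T' := (Finset.mem_filter.mp hT').2.1
      rw [← Finset.insert_erase hxT, ← Finset.insert_erase hxT', heq]
    · intro e' he'
      obtain ⟨he'P2, hdisj, hins⟩ := Finset.mem_filter.mp he'
      have hxe' : x ∉ e' := Finset.disjoint_left.mp hdisj (Finset.mem_insert_self x {p})
      have hpe' : p ∉ e' := Finset.disjoint_left.mp hdisj
        (Finset.mem_insert_of_mem (Finset.mem_singleton_self p))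
      refine ⟨insert x e', ?_, ?_⟩
      · apply Finset.mem_filter.mpr
        refine ⟨hins x (Finset.mem_insert_self x {p}), Finset.mem_insert_self x e', ?_, ?_⟩
        · intro hmem
          rcases Finset.mem_insert.mp hmem with h | h
          · exact hxp h.symm
          · exact hpe' h
        · rw [Finset.erase_insert hxe']
          exact hins p (Finset.mem_insert_of_mem (Finset.mem_singleton_self p))
      · rw [Finset.erase_insert hxe']
  -- per-pair constraint
  have hκcoll : ∀ e ∈ P2, 1 ≤ κ e → 3 ≤ κ e + collU e := by
    intro e he h1
    obtain ⟨x, p, hxp, hx, hp, hexp⟩ := hpair e he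
    have hκe : κ e = (F.filter (fun T => x ∈ T ∧ p ∈ T)).card := by
      rw [hκdef]; dsimp only; rw [hexp, hfilter_eq]
    have hcolle : collU e = (F.filter (fun T => x ∈ T ∧ p ∉ T ∧ insert p (T.erase x) ∈ F)).card := by
      rw [hexp, hcoll_eq x p hxp hx hp]
    have := hnocon x hx p hp hxp (by omega)
    omega
  -- double counting: total κ-mass is 3|F|
  have hsum3 : ∑ e ∈ P2, κ e = 3 * F.card := by
    have h1 : ∀ e, κ e = ∑ T ∈ F, if e ⊆ T then 1 else 0 := fun e => Finset.card_filter _ _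
    calc ∑ e ∈ P2, κ e = ∑ e ∈ P2, ∑ T ∈ F, if e ⊆ T then 1 else 0 := by
          exact Finset.sum_congr rfl fun e _ => h1 e
    _ = ∑ T ∈ F, ∑ e ∈ P2, if e ⊆ T then 1 else 0 := Finset.sum_comm
    _ = ∑ T ∈ F, (P2.filter (fun e => e ⊆ T)).card := by
          exact Finset.sum_congr rfl fun T _ => (Finset.card_filter _ _).symm
    _ = ∑ _T ∈ F, 3 := by
          refine Finset.sum_congr rfl fun T hT => ?_
          have hpeq : P2.filter (fun e => e ⊆ T) = T.powersetCard 2 := by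
            ext e
            simp only [Finset.mem_filter, hP2, Finset.mem_powersetCard]
            constructor
            · rintro ⟨⟨_, hc⟩, hsub'⟩; exact ⟨hsub', hc⟩
            · rintro ⟨hsub', hc⟩; exact ⟨⟨hsub'.trans (hsub T hT), hc⟩, hsub'⟩
          rw [hpeq, Finset.card_powersetCard, h3 T hT]
          decide
    _ = 3 * F.card := by rw [Finset.sum_const, smul_eq_mul, mul_comm]
  -- the injection bound
  set Shadow : Finset (Finset α) := P2.filter (fun e => 1 ≤ κ e) with hShadow
  set S1 : Finset (Finset α) := P2.filter (fun e => κ e = 1) with hS1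
  set S2 : Finset (Finset α) := P2.filter (fun e => κ e = 2) with hS2
  have hfibermem : ∀ e ∈ Shadow,
      ∀ e' ∈ P2.filter (fun e' => Disjoint e e' ∧ ∀ y ∈ e, insert y e' ∈ F), e' ∈ S2 := by
    intro e he e' he'
    have heS : e ∈ P2 := Finset.mem_of_mem_filter e he
    obtain ⟨he'P2, hdisj, hins⟩ := Finset.mem_filter.mp he'
    obtain ⟨x, p, hxp, hx, hp, hexp⟩ := hpair e heS
    have hxe' : x ∉ e' := Finset.disjoint_left.mp hdisj (hexp ▸ Finset.mem_insert_self x {p})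
    have hpe' : p ∉ e' := Finset.disjoint_left.mp hdisj
      (hexp ▸ Finset.mem_insert_of_mem (Finset.mem_singleton_self p))
    have hinsne : insert x e' ≠ insert p e' := by
      intro h
      have : x ∈ insert p e' := h ▸ Finset.mem_insert_self x e'
      rcases Finset.mem_insert.mp this with h' | h'
      · exact hxp h'
      · exact hxe' h'
    have hsubpair : ({insert x e', insert p e'} : Finset (Finset α))
        ⊆ F.filter (fun T => e' ⊆ T) := by
      intro T hT
      rcases Finset.mem_insert.mp hT with h | h
      · subst h
        exact Finset.mem_filter.mpr ⟨hins x (hexp ▸ Finset.mem_insert_self x {p}),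
          Finset.subset_insert _ _⟩
      · rw [Finset.mem_singleton] at h
        subst h
        exact Finset.mem_filter.mpr ⟨hins p
          (hexp ▸ Finset.mem_insert_of_mem (Finset.mem_singleton_self p)),
          Finset.subset_insert _ _⟩
    have hge2 : 2 ≤ κ e' := by
      have hcardpair : ({insert x e', insert p e'} : Finset (Finset α)).card = 2 := by
        rw [Finset.card_insert_of_notMem (fun h => hinsne (Finset.mem_singleton.mp h)),
          Finset.card_singleton]
      calc 2 = ({insert x e', insert p e'} : Finset (Finset α)).card := hcardpair.symm
      _ ≤ (F.filter (fun T => e' ⊆ T)).card := Finset.card_le_card hsubpair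
      _ = κ e' := rfl
    have hle2 := hκ2 e' he'P2
    exact Finset.mem_filter.mpr ⟨he'P2, by omega⟩
  have hinjbound : ∑ e ∈ Shadow, collU e ≤ S2.card := by
    have hsig : ∑ e ∈ Shadow, collU e = (Shadow.sigma (fun e =>
        P2.filter (fun e' => Disjoint e e' ∧ ∀ y ∈ e, insert y e' ∈ F))).card := by
      rw [Finset.card_sigma]
    rw [hsig]
    apply Finset.card_le_card_of_injOn (fun q => q.2)
    · intro q hq
      have := Finset.mem_sigma.mp hq
      exact hfibermem q.1 this.1 q.2 this.2
    · intro q1 hq1 q2 hq2 heq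
      have h1 := Finset.mem_sigma.mp hq1
      have h2 := Finset.mem_sigma.mp hq2
      have hmem := hfibermem q1.1 h1.1 q1.2 h1.2
      have hκ2' : κ q1.2 = 2 := (Finset.mem_filter.mp hmem).2
      obtain ⟨A, B, hABne, hABeq⟩ := Finset.card_eq_two.mp hκ2'
      -- both A and B are in F and contain q1.2
      have hAmem : A ∈ F.filter (fun T => q1.2 ⊆ T) := hABeq ▸ Finset.mem_insert_self A {B}
      have hBmem : B ∈ F.filter (fun T => q1.2 ⊆ T) :=
        hABeq ▸ Finset.mem_insert_of_mem (Finset.mem_singleton_self B)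
      have hAF := Finset.mem_filter.mp hAmem
      have hBF := Finset.mem_filter.mp hBmem
      have hcardA : (A \ q1.2).card = 1 := by
        rw [Finset.card_sdiff_of_subset hAF.2, h3 A hAF.1]
        have : q1.2.card = 2 := by
          have := Finset.mem_powersetCard.mp (Finset.mem_filter.mp h1.2).1
          exact this.2
        omega
      have hcardB : (B \ q1.2).card = 1 := by
        rw [Finset.card_sdiff_of_subset hBF.2, h3 B hBF.1]
        have : q1.2.card = 2 := by
          have := Finset.mem_powersetCard.mp (Finset.mem_filter.mp h1.2).1
          exact this.2
        omega
      have key : ∀ e ∈ Shadow, q1.2 ∈ P2.filter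
          (fun e' => Disjoint e e' ∧ ∀ y ∈ e, insert y e' ∈ F) →
          e = (A \ q1.2) ∪ (B \ q1.2) := by
        intro e he hq
        obtain ⟨_, hdisj, hins⟩ := Finset.mem_filter.mp hq
        have hecard : e.card = 2 :=
          (Finset.mem_powersetCard.mp (Finset.mem_of_mem_filter e he)).2
        have hesub : e ⊆ (A \ q1.2) ∪ (B \ q1.2) := by
          intro y hy
          have hyT : insert y q1.2 ∈ F.filter (fun T => q1.2 ⊆ T) :=
            Finset.mem_filter.mpr ⟨hins y hy, Finset.subset_insert _ _⟩
          have hyne : y ∉ q1.2 := Finset.disjoint_left.mp hdisj hy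
          rw [hABeq] at hyT
          rcases Finset.mem_insert.mp hyT with h | h
          · exact Finset.mem_union_left _ (Finset.mem_sdiff.mpr
              ⟨h ▸ Finset.mem_insert_self y q1.2, hyne⟩)
          · rw [Finset.mem_singleton] at h
            exact Finset.mem_union_right _ (Finset.mem_sdiff.mpr
              ⟨h ▸ Finset.mem_insert_self y q1.2, hyne⟩)
        have hucard : ((A \ q1.2) ∪ (B \ q1.2)).card ≤ e.card := by
          calc ((A \ q1.2) ∪ (B \ q1.2)).card ≤ (A \ q1.2).card + (B \ q1.2).card :=
                Finset.card_union_le _ _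
          _ ≤ e.card := by omega
        exact Finset.eq_of_subset_of_card_le hesub hucard
      have heq' : q1.2 = q2.2 := heq
      have he1 := key q1.1 h1.1 h1.2
      have he2 := key q2.1 h2.1 (by rw [heq']; exact h2.2)
      have hfst : q1.1 = q2.1 := by rw [he1, he2]
      exact Sigma.ext hfst (heq_of_eq heq')
  -- splitting the κ-mass
  have hsplitsum : ∑ e ∈ P2, κ e = S1.card + 2 * S2.card := by
    have hval : ∀ e ∈ P2, κ e = (if κ e = 1 then 1 else 0) + (if κ e = 2 then 2 else 0) := by
      intro e he
      have := hκ2 e he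
      interval_cases h : κ e <;> simp
    calc ∑ e ∈ P2, κ e
        = ∑ e ∈ P2, ((if κ e = 1 then 1 else 0) + (if κ e = 2 then 2 else 0)) :=
          Finset.sum_congr rfl hval
    _ = (∑ e ∈ P2, if κ e = 1 then 1 else 0) + ∑ e ∈ P2, (if κ e = 2 then 2 else 0) :=
          Finset.sum_add_distrib
    _ = S1.card + 2 * S2.card := by
          congr 1
          · rw [hS1]
            exact (Finset.card_filter _ _).symm
          · rw [hS2, Finset.card_filter]
            rw [Finset.mul_sum]
            exact Finset.sum_congr rfl fun e _ => by split <;> omega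
  -- the shadow splits into S1 and S2
  have hsh1 : Shadow.filter (fun e => κ e = 1) = S1 := by
    rw [hShadow, hS1, Finset.filter_filter]
    apply Finset.filter_congr
    intro e _
    constructor
    · rintro ⟨_, h⟩; exact h
    · intro h; exact ⟨by omega, h⟩
  have hsh2 : Shadow.filter (fun e => ¬ κ e = 1) = S2 := by
    rw [hShadow, hS2, Finset.filter_filter]
    apply Finset.filter_congr
    intro e he
    have := hκ2 e he
    constructor
    · rintro ⟨h1, h2⟩; omega
    · intro h; constructor <;> omega
  have hlower : 2 * S1.card + S2.card ≤ ∑ e ∈ Shadow, collU e := by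
    have hsplit := Finset.sum_filter_add_sum_filter_not Shadow (fun e => κ e = 1) collU
    have hb1 : 2 * S1.card ≤ ∑ e ∈ Shadow.filter (fun e => κ e = 1), collU e := by
      rw [hsh1]
      calc 2 * S1.card = ∑ _e ∈ S1, 2 := by rw [Finset.sum_const, smul_eq_mul, mul_comm]
      _ ≤ ∑ e ∈ S1, collU e := by
          apply Finset.sum_le_sum
          intro e he
          have heP2 : e ∈ P2 := Finset.mem_of_mem_filter e he
          have hκe : κ e = 1 := (Finset.mem_filter.mp he).2
          have := hκcoll e heP2 (by omega)
          omega
    have hb2 : S2.card ≤ ∑ e ∈ Shadow.filter (fun e => ¬ κ e = 1), collU e := by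
      rw [hsh2]
      calc S2.card = ∑ _e ∈ S2, 1 := by rw [Finset.sum_const, smul_eq_mul, mul_one]
      _ ≤ ∑ e ∈ S2, collU e := by
          apply Finset.sum_le_sum
          intro e he
          have heP2 : e ∈ P2 := Finset.mem_of_mem_filter e he
          have hκe : κ e = 2 := (Finset.mem_filter.mp he).2
          have := hκcoll e heP2 (by omega)
          omega
    omega
  -- combine everything
  have hS1zero : S1.card = 0 := by omega
  omega

theorem hyp_main (n : ℕ) (R : Finset α) (F : Finset (Finset α))
    (hn : msr R F ≤ n)
    (hsub : ∀ A ∈ F, A ⊆ R) (hcard : ∀ A ∈ F, 3 ≤ A.card)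
    (hR : 2 ≤ R.card) (hF : 2 * R.card - 3 ≤ F.card)
    (rep : HypRep G R F) :
    G.HasMinor (completeBipartiteGraph (Fin 3) (Fin 3)) := by
  induction n generalizing R F with
  | zero =>
    exfalso
    have : 3 * R.card ≤ msr R F := by unfold msr; omega
    omega
  | succ n ih =>
    by_cases hA4 : ∃ A ∈ F, 4 ≤ A.card
    · obtain ⟨A, hA, hA4'⟩ := hA4
      by_cases hsh : ∃ x ∈ A, A.erase x ∉ F
      · -- shrink A to A.erase x
        obtain ⟨x, hxA, hnotmem⟩ := hsh
        have hAe : A.erase x ∉ F.erase A := fun h => hnotmem (Finset.mem_of_mem_erase h)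
        have hcardF' : (insert (A.erase x) (F.erase A)).card = F.card := by
          rw [Finset.card_insert_of_notMem hAe, Finset.card_erase_of_mem hA]
          have : 1 ≤ F.card := Finset.card_pos.mpr ⟨A, hA⟩
          omega
        have hsum : (insert (A.erase x) (F.erase A)).sum Finset.card + 1 ≤ F.sum Finset.card := by
          have h0 : (insert (A.erase x) (F.erase A)).sum Finset.card
              = (A.erase x).card + (F.erase A).sum Finset.card := Finset.sum_insert hAe
          have h1 : (F.erase A).sum Finset.card + A.card = F.sum Finset.card :=
            Finset.sum_erase_add F _ hA
          have h2 : (A.erase x).card = A.card - 1 := Finset.card_erase_of_mem hxA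
          omega
        apply ih R (insert (A.erase x) (F.erase A)) ?_ ?_ ?_ hR ?_ (rep.shrink hA hnotmem)
        · simp only [msr_def] at hn ⊢
          omega
        · intro B hB
          rcases Finset.mem_insert.mp hB with h | h
          · exact h ▸ (Finset.erase_subset x A).trans (hsub A hA)
          · exact hsub B (Finset.mem_of_mem_erase h)
        · intro B hB
          rcases Finset.mem_insert.mp hB with h | h
          · rw [h, Finset.card_erase_of_mem hxA]; omega
          · exact hcard B (Finset.mem_of_mem_erase h)
        · omega
      · push_neg at hsh
        by_cases h5 : 5 ≤ A.card
        · -- |A| ≥ 5 : common triple win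
          obtain ⟨x, y, hx, hy, hxy⟩ := Finset.one_lt_card_iff.mp (by omega : 1 < A.card)
          have hTcard : 2 < ((A.erase x).erase y).card := by
            rw [Finset.card_erase_of_mem (Finset.mem_erase.mpr ⟨fun h => hxy h.symm, hy⟩),
              Finset.card_erase_of_mem hx]
            omega
          obtain ⟨u, v, w, hu, hv, hw, huv, huw, hvw⟩ := Finset.two_lt_card_iff.mp hTcard
          have hmemA : ∀ z ∈ (A.erase x).erase y, z ∈ A := fun z hz =>
            Finset.mem_of_mem_erase (Finset.mem_of_mem_erase hz)
          have hmemX : ∀ z ∈ (A.erase x).erase y, z ∈ A.erase x := fun z hz =>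
            Finset.mem_of_mem_erase hz
          have hmemY : ∀ z ∈ (A.erase x).erase y, z ∈ A.erase y := fun z hz => by
            have h1 := Finset.mem_erase.mp hz
            have h2 := Finset.mem_erase.mp h1.2
            exact Finset.mem_erase.mpr ⟨h1.1, h2.2⟩
          have hAx : A ≠ A.erase x := by
            intro h
            have := Finset.card_erase_of_mem hx
            rw [← h] at this
            omega
          have hAy : A ≠ A.erase y := by
            intro h
            have := Finset.card_erase_of_mem hy
            rw [← h] at this
            omega
          have hxyE : A.erase x ≠ A.erase y := by
            intro h
            have hxmem : x ∈ A.erase y := Finset.mem_erase.mpr ⟨hxy, hx⟩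
            rw [← h] at hxmem
            exact (Finset.mem_erase.mp hxmem).1 rfl
          exact win_common rep hA (hsh x hx) (hsh y hy) hAx hAy hxyE
            (hsub A hA (hmemA u hu)) (hsub A hA (hmemA v hv)) (hsub A hA (hmemA w hw))
            huv huw hvw (hmemA u hu) (hmemX u hu) (hmemY u hu)
            (hmemA v hv) (hmemX v hv) (hmemY v hv) (hmemA w hw) (hmemX w hw) (hmemY w hw)
        · -- |A| = 4 : four-triple win
          have hA4'' : A.card = 4 := by omega
          obtain ⟨d, hd⟩ : A.Nonempty := Finset.card_pos.mp (by omega)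
          have hcard3 : (A.erase d).card = 3 := by
            rw [Finset.card_erase_of_mem hd]; omega
          obtain ⟨a, b, c, hab, hac, hbc, hABC⟩ := Finset.card_eq_three.mp hcard3
          have haA : a ∈ A := Finset.mem_of_mem_erase (hABC ▸ (by simp : a ∈ ({a,b,c} : Finset α)))
          have hbA : b ∈ A := Finset.mem_of_mem_erase (hABC ▸ (by simp : b ∈ ({a,b,c} : Finset α)))
          have hcA : c ∈ A := Finset.mem_of_mem_erase (hABC ▸ (by simp : c ∈ ({a,b,c} : Finset α)))
          have had : a ≠ d := by
            intro h; subst h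
            exact absurd (hABC ▸ (by simp : a ∈ ({a,b,c} : Finset α)))
              (Finset.notMem_erase a A)
          have hbd : b ≠ d := by
            intro h; subst h
            exact absurd (hABC ▸ (by simp : b ∈ ({a,b,c} : Finset α)))
              (Finset.notMem_erase b A)
          have hcd : c ≠ d := by
            intro h; subst h
            exact absurd (hABC ▸ (by simp : c ∈ ({a,b,c} : Finset α)))
              (Finset.notMem_erase c A)
          -- P1 = A.erase d ∋ a,b,c ; P2 = A ; P3 = A.erase c ∋ a,b,d ; P4 = A.erase a ∋ c,d
          have hP1 : A.erase d ∈ F := hsh d hd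
          have hP3 : A.erase c ∈ F := hsh c hcA
          have hP4 : A.erase a ∈ F := hsh a haA
          have hApos : ∀ z, z ∈ A → (A.erase z).card = 3 := fun z hz => by
            rw [Finset.card_erase_of_mem hz]; omega
          have hne1 : A.erase d ≠ A := fun h => by
            have := hApos d hd; rw [h] at this; omega
          have hne3 : A.erase c ≠ A := fun h => by
            have := hApos c hcA; rw [h] at this; omega
          have hne4 : A.erase a ≠ A := fun h => by
            have := hApos a haA; rw [h] at this; omega
          have herase_ne : ∀ z w : α, z ≠ w → z ∈ A → A.erase z ≠ A.erase w := by
            intro z w hzw hz h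
            have : w ∈ A.erase w ↔ False := by simp
            have hzmem : z ∈ A.erase w := Finset.mem_erase.mpr ⟨hzw, hz⟩
            rw [← h] at hzmem
            exact (Finset.mem_erase.mp hzmem).1 rfl
          exact win_four rep hP1 hA hP3 hP4
            hne1 (herase_ne d c (fun h => hcd h.symm) hd) hne3.symm
            (herase_ne a d had haA) hne4 (herase_ne a c hac haA)
            (hsub A hA haA) (hsub A hA hbA) (hsub A hA hcA) (hsub A hA hd)
            hab hac had hbc hbd hcd
            (Finset.mem_erase.mpr ⟨had, haA⟩) (Finset.mem_erase.mpr ⟨hbd, hbA⟩)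
            (Finset.mem_erase.mpr ⟨hcd, hcA⟩)
            haA hbA hcA
            (Finset.mem_erase.mpr ⟨hac, haA⟩) (Finset.mem_erase.mpr ⟨hbc, hbA⟩)
            (Finset.mem_erase.mpr ⟨hcd.symm, hd⟩)
            (Finset.mem_erase.mpr ⟨hac.symm, hcA⟩) (Finset.mem_erase.mpr ⟨had.symm, hd⟩)
    · -- all sets have size exactly 3
      push_neg at hA4
      have h3 : ∀ A ∈ F, A.card = 3 := fun A hA =>
        le_antisymm (by have := hA4 A hA; omega) (hcard A hA)
      by_cases hc4 : R.card ≤ 4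
      · -- base case: contradiction by counting
        exfalso
        have hsubP : F ⊆ R.powersetCard 3 := by
          intro A hA
          rw [Finset.mem_powersetCard]
          exact ⟨hsub A hA, h3 A hA⟩
        have hle := Finset.card_le_card hsubP
        rw [Finset.card_powersetCard] at hle
        have hch : R.card.choose 3 < 2 * R.card - 3 := by
          have hv : R.card = 2 ∨ R.card = 3 ∨ R.card = 4 := by omega
          rcases hv with h | h | h <;> rw [h] <;> decide
        omega
      · push_neg at hc4
        have hc5 : 5 ≤ R.card := hc4
        by_cases htrim : 2 * R.card - 3 < F.card
        · -- trim one triple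
          obtain ⟨A, hA⟩ : F.Nonempty := Finset.card_pos.mp (by omega)
          apply ih R (F.erase A) ?_ (fun B hB => hsub B (Finset.mem_of_mem_erase hB))
            (fun B hB => hcard B (Finset.mem_of_mem_erase hB)) hR ?_
            (rep.restrict (Finset.Subset.refl R) (Finset.erase_subset A F))
          · have h1 : (F.erase A).card = F.card - 1 := Finset.card_erase_of_mem hA
            have h2 : (F.erase A).sum Finset.card ≤ F.sum Finset.card :=
              Finset.sum_le_sum_of_subset (Finset.erase_subset A F)
            have : 1 ≤ F.card := Finset.card_pos.mpr ⟨A, hA⟩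
            simp only [msr_def] at hn ⊢
            omega
          · rw [Finset.card_erase_of_mem hA]
            omega
        · have hFeq : F.card = 2 * R.card - 3 := by omega
          have horacle : ∀ (R' : Finset α) (F' : Finset (Finset α)), msr R' F' < msr R F →
              (∀ A ∈ F', A ⊆ R') → (∀ A ∈ F', 3 ≤ A.card) → 2 ≤ R'.card →
              2 * R'.card - 3 ≤ F'.card → HypRep G R' F' →
              G.HasMinor (completeBipartiteGraph (Fin 3) (Fin 3)) := by
            intro R' F' hlt hsub' hcard' hR' hF' rep'
            exact ih R' F' (by omega) hsub' hcard' hR' hF' rep'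
          by_cases hcod3 : ∃ x ∈ R, ∃ p ∈ R, x ≠ p ∧
              3 ≤ (F.filter (fun T => x ∈ T ∧ p ∈ T)).card
          · obtain ⟨x, hx, p, hp, hxp, hcod⟩ := hcod3
            exact step_codeg G R F hsub h3 hF hc5 rep hx hp hxp hcod horacle
          · by_cases hcon : ∃ x ∈ R, ∃ p ∈ R, x ≠ p ∧ (∃ T₀ ∈ F, x ∈ T₀ ∧ p ∈ T₀) ∧
                (F.filter (fun T => x ∈ T ∧ p ∈ T)).card - 1
                  + (F.filter (fun T => x ∈ T ∧ p ∉ T ∧ insert p (T.erase x) ∈ F)).card ≤ 1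
            · obtain ⟨x, hx, p, hp, hxp, ⟨T₀, hT₀, hxT₀, hpT₀⟩, hL⟩ := hcon
              exact step_contract G R F hsub h3 hFeq hc5 rep hx hp hxp hT₀ hxT₀ hpT₀ hL horacle
            · exfalso
              push_neg at hcod3 hcon
              apply parity_contra hsub h3 hFeq hc5
              · intro x hx p hp hxp
                have := hcod3 x hx p hp hxp
                omega
              · intro x hx p hp hxp hcod1
                obtain ⟨T₀, hT₀⟩ : (F.filter (fun T => x ∈ T ∧ p ∈ T)).Nonempty :=
                  Finset.card_pos.mp (by omega)
                have hT₀' := Finset.mem_filter.mp hT₀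
                have := hcon x hx p hp hxp ⟨T₀, hT₀'.1, hT₀'.2⟩
                omega

end PDN

/-- Let `G` be a simple planar graph with a minimum vertex cover `C` of size `φ ≥ 2`.
Then the vertices outside `C` with degree at least 3 realize at most `2φ − 4` distinct
neighborhoods. -/
theorem planar_distinct_neighborhoods_le {V : Type*} [Fintype V] [DecidableEq V]
    (G : SimpleGraph V) [DecidableRel G.Adj] (hplanar : G.IsPlanar)
    (C : Finset V) (hC : G.IsVertexCoverOld ↑C)
    (hmin : ∀ C' : Finset V, G.IsVertexCoverOld ↑C' → C.card ≤ C'.card)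
    (φ : ℕ) (hφcard : C.card = φ) (hφ : 2 ≤ φ) :
    ((Finset.univ.filter fun v => v ∉ C ∧ 3 ≤ G.degree v).image
        fun v => G.neighborFinset v).card ≤ 2 * φ - 4 := by
  classical
  by_contra hcon
  push_neg at hcon
  set Fam : Finset (Finset V) := (Finset.univ.filter fun v => v ∉ C ∧ 3 ≤ G.degree v).image
    (fun v => G.neighborFinset v) with hFam
  have hrep : ∀ A ∈ Fam, ∃ v, (v ∉ C ∧ 3 ≤ G.degree v) ∧ G.neighborFinset v = A := by
    intro A hA
    obtain ⟨v, hv, hveq⟩ := Finset.mem_image.mp hA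
    exact ⟨v, (Finset.mem_filter.mp hv).2, hveq⟩
  choose vmap hvprop hveq using hrep
  have repG : PDN.HypRep G C Fam := {
    elt := fun u => {u}
    tri := fun A => if h : A ∈ Fam then {vmap A h} else ∅
    elt_conn := fun a _ => PDN.induce_singleton_connected a
    tri_conn := by
      intro A hA
      rw [dif_pos hA]
      exact PDN.induce_singleton_connected _
    elt_disj := by
      intro a _ b _ hab
      simp [Set.disjoint_singleton, hab]
    tri_disj := by
      intro A hA B hB hne
      rw [dif_pos hA, dif_pos hB]
      simp only [Set.disjoint_singleton]
      intro h
      exact hne ((hveq A hA).symm.trans (h ▸ hveq B hB))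
    elt_tri_disj := by
      intro a ha A hA
      rw [dif_pos hA]
      simp only [Set.disjoint_singleton]
      intro h
      exact (hvprop A hA).1 (h ▸ ha)
    adj := by
      intro A hA a haA
      rw [dif_pos hA]
      refine ⟨vmap A hA, rfl, a, rfl, ?_⟩
      have : a ∈ G.neighborFinset (vmap A hA) := (hveq A hA).symm ▸ haA
      exact (SimpleGraph.mem_neighborFinset G _ a).mp this }
  have hsub : ∀ A ∈ Fam, A ⊆ C := by
    intro A hA u hu
    have : u ∈ G.neighborFinset (vmap A hA) := (hveq A hA).symm ▸ hu
    have hadj : G.Adj (vmap A hA) u := (SimpleGraph.mem_neighborFinset G _ u).mp this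
    rcases hC hadj with h | h
    · exact absurd h (hvprop A hA).1
    · exact h
  have hcard : ∀ A ∈ Fam, 3 ≤ A.card := by
    intro A hA
    have := (hvprop A hA).2
    rwa [← hveq A hA, SimpleGraph.card_neighborFinset_eq_degree]
  have hminor : G.HasMinor (completeBipartiteGraph (Fin 3) (Fin 3)) := by
    apply PDN.hyp_main (PDN.msr C Fam) C Fam (le_refl _) hsub hcard (by omega) (by omega) repG
  exact hplanar.2 hminor
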